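/- arXiv:hep-th/0103104 — 2 statements merged into one kernel-verified Lean document; each statement's English description precedes it below -/
import Mathlib

section
/- Let P : M^{1+n} → G_{j,N}(ℂ) be smooth with P² = P. If [P, □P] = 0 and [P, ∂_μ P] ⊗ ∂^μ P + ∂^μ P ⊗ [P, ∂_μ P] = 0 (summed with Minkowski signature), then for every k ≥ 1 the k-fold tensor power satisfies [⊗^k P, □(⊗^k P)] = 0, so the tensor Noether currents [∂_μ(⊗^k P), ⊗^k P] are conserved. -/
open Matrix Kronecker

attribute [local instance] Matrix.normedAddCommGroup Matrix.normedSpace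

/-- The partial derivative `∂_μ` of a function on `(1+n)`-dimensional
Minkowski space `M^{1+n} = Fin (n+1) → ℝ` (coordinate `0` is time). -/
noncomputable def pd {n : ℕ} {E : Type*} [NormedAddCommGroup E] [NormedSpace ℝ E]
    (μ : Fin (n + 1)) (f : (Fin (n + 1) → ℝ) → E) (x : Fin (n + 1) → ℝ) : E :=
  deriv (fun t : ℝ => f (x + t • (Pi.single μ 1 : Fin (n + 1) → ℝ))) 0

/-- The Minkowski signed sum `Σ'_μ A_μ = A_0 − Σ_{i=1}^n A_i`, implementing
index contraction with the metric `diag(1,−1,…,−1)`. -/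
def msum {n : ℕ} {E : Type*} [AddCommGroup E] (A : Fin (n + 1) → E) : E :=
  A 0 - ∑ i ∈ Finset.univ.erase (0 : Fin (n + 1)), A i

/-- The `k`-fold Kronecker tensor power `⊗^k P` of a square matrix. -/
def tpow {N : ℕ} (k : ℕ) (P : Matrix (Fin N) (Fin N) ℂ) :
    Matrix (Fin k → Fin N) (Fin k → Fin N) ℂ :=
  fun i j => ∏ t : Fin k, P (i t) (j t)

/-!
Write `Q = ⊗^k P` as the Kronecker product of the constant family `P`. Along the coordinate
line through `x`, the Leibniz rule writes `∂_μ∂_μ Q` as a sum of terms carrying `∂_μ∂_μ P` in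
one tensor slot and terms carrying `∂_μ P` in two slots, with `P` in all other slots. Since
`P² = P`, commuting with `Q` acts slot by slot. A one-slot term becomes `[P, ∂_μ∂_μ P]` in that
slot, and these sum to `[P, □P] = 0`. Differentiating `P² = P` gives `∂P = P ∂P + ∂P P`, so a
two-slot term becomes `P∂P ⊗ P∂P − ∂P P ⊗ ∂P P`, which is half of
`[P, ∂P] ⊗ ∂P + ∂P ⊗ [P, ∂P]` and again sums to zero. Finally `∂^μ [∂_μ Q, Q] = [□Q, Q]`,
because the first-order terms cancel.
-/

open Function

theorem Function.mul_update {κ α : Type*} [DecidableEq κ] [Mul α] (f g : κ → α) (r : κ)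
    (y : α) : f * update g r y = update (f * g) r (f r * y) := by
  rw [update_mul, update_eq_self]

theorem Function.update_mul' {κ α : Type*} [DecidableEq κ] [Mul α] (f g : κ → α) (r : κ)
    (y : α) : update g r y * f = update (g * f) r (y * f r) := by
  rw [update_mul, update_eq_self]

section Msum

variable {n : ℕ} {E F : Type*} [AddCommGroup E] [AddCommGroup F]

theorem map_msum {G : Type*} [FunLike G E F] [AddMonoidHomClass G E F] (f : G)
    (A : Fin (n + 1) → E) : f (msum A) = msum fun μ => f (A μ) := by
  simp only [msum, map_sub, map_sum]

theorem msum_add (A B : Fin (n + 1) → E) :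
    msum (fun μ => A μ + B μ) = msum A + msum B := by
  simp only [msum, Finset.sum_add_distrib]
  abel

theorem msum_sub (A B : Fin (n + 1) → E) :
    msum (fun μ => A μ - B μ) = msum A - msum B := by
  simp only [msum, Finset.sum_sub_distrib]
  abel

theorem msum_sum {α : Type*} (s : Finset α) (A : α → Fin (n + 1) → E) :
    msum (fun μ => ∑ a ∈ s, A a μ) = ∑ a ∈ s, msum (A a) := by
  simp only [msum, Finset.sum_sub_distrib]
  rw [Finset.sum_comm]

theorem smul_msum {R : Type*} [Semiring R] [Module R E] (c : R) (A : Fin (n + 1) → E) :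
    c • msum A = msum fun μ => c • A μ :=
  map_msum (DistribSMul.toAddMonoidHom E c) A

theorem mul_msum {L : Type*} [NonUnitalNonAssocRing L] (a : L) (A : Fin (n + 1) → L) :
    a * msum A = msum fun μ => a * A μ :=
  map_msum (AddMonoidHom.mulLeft a) A

theorem msum_mul {L : Type*} [NonUnitalNonAssocRing L] (A : Fin (n + 1) → L) (a : L) :
    msum A * a = msum fun μ => A μ * a :=
  map_msum (AddMonoidHom.mulRight a) A

end Msum

section KroneckerPi

variable {κ ι R : Type*} [Fintype κ] [CommRing R]

def kroneckerPi (A : κ → Matrix ι ι R) : Matrix (κ → ι) (κ → ι) R :=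
  of fun i j => ∏ t, A t (i t) (j t)

theorem tpow_eq_kroneckerPi {N : ℕ} (k : ℕ) (P : Matrix (Fin N) (Fin N) ℂ) :
    tpow k P = kroneckerPi fun _ => P :=
  rfl

def kroneckerPiMultilinear :
    MultilinearMap R (fun _ : κ => Matrix ι ι R) (Matrix (κ → ι) (κ → ι) R) :=
  MultilinearMap.pi fun i => MultilinearMap.pi fun j =>
    (MultilinearMap.mkPiAlgebra R κ R).compLinearMap fun t => entryLinearMap R R (i t) (j t)

@[simp]
theorem kroneckerPiMultilinear_apply (A : κ → Matrix ι ι R) :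
    kroneckerPiMultilinear A = kroneckerPi A :=
  rfl

variable [DecidableEq κ]

theorem kroneckerPi_mul_kroneckerPi [Fintype ι] (A B : κ → Matrix ι ι R) :
    kroneckerPi A * kroneckerPi B = kroneckerPi (A * B) := by
  ext i j
  simp only [mul_apply, kroneckerPi, of_apply, Pi.mul_apply, Finset.prod_univ_sum,
    Fintype.piFinset_univ, Finset.prod_mul_distrib]

theorem kroneckerPi_update_apply (A : κ → Matrix ι ι R) (r : κ) (X : Matrix ι ι R)
    (i j : κ → ι) :
    kroneckerPi (update A r X) i j =
      X (i r) (j r) * ∏ t ∈ Finset.univ.erase r, A t (i t) (j t) := by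
  simp only [kroneckerPi, of_apply, apply_update (fun t (M : Matrix ι ι R) => M (i t) (j t)),
    Finset.prod_update_of_mem (Finset.mem_univ r), Finset.sdiff_singleton_eq_erase]

/-- Puts a matrix on `ι × ι` into the tensor slots `r, s` of `⊗_t A t`. -/
def kroneckerPiPair (A : κ → Matrix ι ι R) (r s : κ) :
    Matrix (ι × ι) (ι × ι) R →ₗ[R] Matrix (κ → ι) (κ → ι) R where
  toFun Z := of fun i j => Z (i r, i s) (j r, j s) * ∏ t ∈ {r, s}ᶜ, A t (i t) (j t)
  map_add' _ _ := by ext; simp [add_mul]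
  map_smul' _ _ := by ext; simp [mul_assoc]

theorem kroneckerPiPair_kronecker (A : κ → Matrix ι ι R) {r s : κ} (h : r ≠ s)
    (X Y : Matrix ι ι R) :
    kroneckerPiPair A r s (X ⊗ₖ Y) = kroneckerPi (update (update A r X) s Y) := by
  ext i j
  rw [kroneckerPi, of_apply, ← Finset.prod_mul_prod_compl {r, s}, Finset.prod_pair h]
  simp only [kroneckerPiPair, LinearMap.coe_mk, AddHom.coe_mk, of_apply, kroneckerMap_apply,
    update_self, update_of_ne h]
  congr 1
  refine Finset.prod_congr rfl fun t ht => ?_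
  simp only [Finset.mem_compl, Finset.mem_insert, Finset.mem_singleton, not_or] at ht
  rw [update_of_ne ht.2, update_of_ne ht.1]

variable [Fintype ι] {P : Matrix ι ι R}

theorem kroneckerPi_const_mul_sub_mul_update (hP : IsIdempotentElem P) (r : κ)
    (X : Matrix ι ι R) :
    kroneckerPi (fun _ => P) * kroneckerPi (update (fun _ => P) r X) -
        kroneckerPi (update (fun _ => P) r X) * kroneckerPi (fun _ => P) =
      kroneckerPi (update (fun _ => P) r (P * X - X * P)) := by
  have hc : ((fun _ => P) * fun _ => P : κ → Matrix ι ι R) = fun _ => P := funext fun _ => hP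
  rw [kroneckerPi_mul_kroneckerPi, kroneckerPi_mul_kroneckerPi, mul_update, update_mul', hc,
    ← kroneckerPiMultilinear_apply, ← kroneckerPiMultilinear_apply,
    ← kroneckerPiMultilinear_apply, MultilinearMap.map_update_sub]

theorem kroneckerPi_const_mul_sub_mul_update_update (hP : IsIdempotentElem P) {r s : κ}
    (h : r ≠ s) (X : Matrix ι ι R) :
    kroneckerPi (fun _ => P) * kroneckerPi (update (update (fun _ => P) r X) s X) -
        kroneckerPi (update (update (fun _ => P) r X) s X) * kroneckerPi (fun _ => P) =
      kroneckerPiPair (fun _ => P) r s ((P * X) ⊗ₖ (P * X) - (X * P) ⊗ₖ (X * P)) := by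
  have hc : ((fun _ => P) * fun _ => P : κ → Matrix ι ι R) = fun _ => P := funext fun _ => hP
  rw [kroneckerPi_mul_kroneckerPi, kroneckerPi_mul_kroneckerPi, mul_update, mul_update,
    update_mul', update_mul', hc, map_sub, kroneckerPiPair_kronecker _ h,
    kroneckerPiPair_kronecker _ h]

end KroneckerPi

theorem two_smul_kronecker_sub_kronecker {ι R : Type*} [CommRing R] (A B : Matrix ι ι R) :
    (2 : R) • (A ⊗ₖ A - B ⊗ₖ B) = (A - B) ⊗ₖ (A + B) + (A + B) ⊗ₖ (A - B) := by
  ext i j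
  simp only [Matrix.smul_apply, Matrix.sub_apply, Matrix.add_apply, kroneckerMap_apply,
    smul_eq_mul]
  ring

section Commutator

variable {n : ℕ} {κ ι 𝕜 : Type*} [Fintype κ] [DecidableEq κ] [Fintype ι] [Field 𝕜]
  [NeZero (2 : 𝕜)] {P : Matrix ι ι 𝕜}

theorem msum_kronecker_sub_kronecker_eq_zero (D : Fin (n + 1) → Matrix ι ι 𝕜)
    (hD : ∀ μ, D μ = P * D μ + D μ * P)
    (hsub : msum (fun μ =>
      (P * D μ - D μ * P) ⊗ₖ D μ + D μ ⊗ₖ (P * D μ - D μ * P)) = 0) :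
    msum (fun μ => (P * D μ) ⊗ₖ (P * D μ) - (D μ * P) ⊗ₖ (D μ * P)) = 0 := by
  have htwo : ∀ μ, (2 : 𝕜) • ((P * D μ) ⊗ₖ (P * D μ) - (D μ * P) ⊗ₖ (D μ * P)) =
      (P * D μ - D μ * P) ⊗ₖ D μ + D μ ⊗ₖ (P * D μ - D μ * P) := fun μ => by
    rw [two_smul_kronecker_sub_kronecker, ← hD μ]
  rw [← smul_eq_zero_iff_right (two_ne_zero' 𝕜), smul_msum]
  simpa only [htwo] using hsub

theorem kroneckerPi_const_commute_msum (hP : IsIdempotentElem P)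
    (D D₂ : Fin (n + 1) → Matrix ι ι 𝕜) (hD : ∀ μ, D μ = P * D μ + D μ * P)
    (heom : P * msum D₂ - msum D₂ * P = 0)
    (hsub : msum (fun μ =>
      (P * D μ - D μ * P) ⊗ₖ D μ + D μ ⊗ₖ (P * D μ - D μ * P)) = 0) :
    Commute (kroneckerPi fun _ : κ => P) (msum fun μ =>
      ∑ r : κ, kroneckerPi (update (fun _ => P) r (D₂ μ)) +
        ∑ r : κ, ∑ s ∈ Finset.univ.erase r,
          kroneckerPi (update (update (fun _ => P) r (D μ)) s (D μ))) := by
  have hsingle : ∀ r : κ, Commute (kroneckerPi fun _ : κ => P)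
      (msum fun μ => kroneckerPi (update (fun _ => P) r (D₂ μ))) := fun r => by
    rw [Commute, SemiconjBy, ← sub_eq_zero, mul_msum, msum_mul, ← msum_sub]
    simp only [kroneckerPi_const_mul_sub_mul_update hP]
    have h := map_msum (kroneckerPiMultilinear.toLinearMap (fun _ : κ => P) r)
      fun μ => P * D₂ μ - D₂ μ * P
    rw [msum_sub, ← mul_msum, ← msum_mul, heom, map_zero] at h
    exact h.symm
  have hpair : ∀ r : κ, ∀ s ∈ Finset.univ.erase r, Commute (kroneckerPi fun _ : κ => P)
      (msum fun μ => kroneckerPi (update (update (fun _ => P) r (D μ)) s (D μ))) :=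
    fun r s hs => by
      rw [Commute, SemiconjBy, ← sub_eq_zero, mul_msum, msum_mul, ← msum_sub]
      simp only [kroneckerPi_const_mul_sub_mul_update_update hP (Finset.ne_of_mem_erase hs).symm]
      rw [← map_msum, msum_kronecker_sub_kronecker_eq_zero D hD hsub, map_zero]
  rw [msum_add, msum_sum, msum_sum]
  refine (Commute.sum_right _ _ _ fun r _ => hsingle r).add_right
    (Commute.sum_right _ _ _ fun r _ => ?_)
  rw [msum_sum]
  exact Commute.sum_right _ _ _ (hpair r)

end Commutator

section Calculus

variable {𝕜 𝔸 : Type*} [NontriviallyNormedField 𝕜] {x : 𝕜}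

theorem hasDerivAt_matrix_iff {l m E : Type*} [Fintype l] [Fintype m] [NormedAddCommGroup E]
    [NormedSpace 𝕜 E] {f : 𝕜 → Matrix l m E} {f' : Matrix l m E} :
    HasDerivAt f f' x ↔ ∀ i j, HasDerivAt (fun t => f t i j) (f' i j) x :=
  hasDerivAt_pi.trans (forall_congr' fun _ => hasDerivAt_pi)

section NormedRing

variable [NormedRing 𝔸] [NormedAlgebra 𝕜 𝔸]

theorem HasDerivAt.matrix_mul {l m p : Type*} [Fintype l] [Fintype m] [Fintype p]
    {f : 𝕜 → Matrix l m 𝔸} {g : 𝕜 → Matrix m p 𝔸} {f' : Matrix l m 𝔸} {g' : Matrix m p 𝔸}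
    (hf : HasDerivAt f f' x) (hg : HasDerivAt g g' x) :
    HasDerivAt (fun t => f t * g t) (f' * g x + f x * g') x := by
  rw [hasDerivAt_matrix_iff] at hf hg ⊢
  intro i j
  simp only [mul_apply, Matrix.add_apply, ← Finset.sum_add_distrib]
  exact HasDerivAt.fun_sum fun k _ => (hf i k).fun_mul (hg k j)

theorem deriv_deriv_mul_sub_mul_deriv {ι : Type*} [Fintype ι] {f : 𝕜 → Matrix ι ι 𝔸}
    (hf : Differentiable 𝕜 f) (hf' : DifferentiableAt 𝕜 (deriv f) x) :
    deriv (fun t => deriv f t * f t - f t * deriv f t) x =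
      deriv (deriv f) x * f x - f x * deriv (deriv f) x := by
  refine ((hf'.hasDerivAt.matrix_mul (hf x).hasDerivAt).fun_sub
    ((hf x).hasDerivAt.matrix_mul hf'.hasDerivAt)).deriv.trans ?_
  -- `abel` fails here: the two copies of `deriv f x * deriv f x` carry different (defeq)
  -- instances, so the cancellation is left to unification.
  exact (congrArg (· - _) (add_comm _ _)).trans (add_sub_add_left_eq_sub _ _ _)

end NormedRing

variable [NormedCommRing 𝔸] [NormedAlgebra 𝕜 𝔸] {κ ι : Type*} [Fintype κ] [DecidableEq κ]
  [Fintype ι]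

theorem ContDiff.kroneckerPi {E : Type*} [NormedAddCommGroup E] [NormedSpace 𝕜 E]
    {m : WithTop ℕ∞} {A : κ → E → Matrix ι ι 𝔸} (hA : ∀ r, ContDiff 𝕜 m (A r)) :
    ContDiff 𝕜 m fun y => kroneckerPi fun r => A r y :=
  contDiff_pi.2 fun i => contDiff_pi.2 fun j =>
    contDiff_prod fun r _ => contDiff_pi.1 (contDiff_pi.1 (hA r) (i r)) (j r)

theorem HasDerivAt.kroneckerPi {A : κ → 𝕜 → Matrix ι ι 𝔸} {A' : κ → Matrix ι ι 𝔸}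
    (hA : ∀ r, HasDerivAt (A r) (A' r) x) :
    HasDerivAt (fun t => kroneckerPi fun r => A r t)
      (∑ r, kroneckerPi (update (fun r => A r x) r (A' r))) x := by
  rw [hasDerivAt_matrix_iff]
  intro i j
  refine (HasDerivAt.fun_finsetProd (u := Finset.univ) fun r _ =>
    hasDerivAt_matrix_iff.1 (hA r) (i r) (j r)).congr_deriv ?_
  simp only [Matrix.sum_apply, kroneckerPi_update_apply, smul_eq_mul, mul_comm]

theorem hasDerivAt_deriv_kroneckerPi_const {g : 𝕜 → Matrix ι ι 𝔸} {g'' : Matrix ι ι 𝔸}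
    (hg : Differentiable 𝕜 g) (hg' : HasDerivAt (deriv g) g'' x) :
    HasDerivAt (deriv fun t => kroneckerPi fun _ : κ => g t)
      (∑ r, kroneckerPi (update (fun _ => g x) r g'') +
        ∑ r, ∑ s ∈ Finset.univ.erase r,
          kroneckerPi (update (update (fun _ => g x) r (deriv g x)) s (deriv g x))) x := by
  have hderiv : (deriv fun t => kroneckerPi fun _ : κ => g t) =
      fun t => ∑ r, kroneckerPi (update (fun _ => g t) r (deriv g t)) :=
    funext fun t => (HasDerivAt.kroneckerPi fun _ => (hg t).hasDerivAt).deriv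
  have hslot : ∀ r s : κ, HasDerivAt (fun t => update (fun _ => g t) r (deriv g t) s)
      (update (fun _ => deriv g x) r g'' s) x := fun r s => by
    rcases eq_or_ne s r with rfl | h
    · simp only [update_self]
      exact hg'
    · simp only [update_of_ne h]
      exact (hg x).hasDerivAt
  rw [hderiv]
  refine (HasDerivAt.fun_sum fun r _ => HasDerivAt.kroneckerPi (hslot r)).congr_deriv ?_
  rw [← Finset.sum_add_distrib]
  refine Finset.sum_congr rfl fun r _ => ?_
  rw [← Finset.add_sum_erase _ _ (Finset.mem_univ r)]
  simp only [update_idem, update_self]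
  congr 1
  exact Finset.sum_congr rfl fun s hs => by rw [update_of_ne (Finset.ne_of_mem_erase hs)]

end Calculus

section PartialDerivative

variable {n : ℕ}

theorem pd_add_smul_single {E : Type*} [NormedAddCommGroup E] [NormedSpace ℝ E]
    (μ : Fin (n + 1)) (f : (Fin (n + 1) → ℝ) → E) (x : Fin (n + 1) → ℝ) (s : ℝ) :
    pd μ f (x + s • Pi.single μ 1) = deriv (fun t => f (x + t • Pi.single μ 1)) s := by
  rw [pd, ← zero_add s, ← deriv_comp_add_const, zero_add]
  congr 1
  funext t
  rw [add_smul, add_comm (t • _), add_assoc]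

theorem pd_pd_eq_deriv_deriv {E : Type*} [NormedAddCommGroup E] [NormedSpace ℝ E]
    (μ : Fin (n + 1)) (f : (Fin (n + 1) → ℝ) → E) (x : Fin (n + 1) → ℝ) :
    pd μ (pd μ f) x = deriv (deriv fun t : ℝ => f (x + t • Pi.single μ 1)) 0 := by
  rw [pd]
  simp only [pd_add_smul_single]

theorem hasDerivAt_pd {E : Type*} [NormedAddCommGroup E] [NormedSpace ℝ E]
    {f : (Fin (n + 1) → ℝ) → E} {x : Fin (n + 1) → ℝ} (hf : DifferentiableAt ℝ f x)
    (μ : Fin (n + 1)) : HasDerivAt (fun t : ℝ => f (x + t • Pi.single μ 1)) (pd μ f x) 0 := by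
  have hf₀ : DifferentiableAt ℝ f (x + (0 : ℝ) • Pi.single μ 1) := by simpa using hf
  exact (hf₀.comp (0 : ℝ) (by fun_prop)).hasDerivAt

section NormedRing

variable {𝔸 : Type*} [NormedRing 𝔸] [NormedAlgebra ℝ 𝔸] {ι : Type*} [Fintype ι]

theorem pd_mul {f g : (Fin (n + 1) → ℝ) → Matrix ι ι 𝔸} {x : Fin (n + 1) → ℝ}
    (hf : DifferentiableAt ℝ f x) (hg : DifferentiableAt ℝ g x) (μ : Fin (n + 1)) :
    pd μ (fun y => f y * g y) x = pd μ f x * g x + f x * pd μ g x := by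
  have h := ((hasDerivAt_pd hf μ).matrix_mul (hasDerivAt_pd hg μ)).deriv
  simp only [zero_smul, add_zero] at h
  exact h

theorem pd_pd_mul_sub_mul_pd {f : (Fin (n + 1) → ℝ) → Matrix ι ι 𝔸} (hf : ContDiff ℝ 2 f)
    (μ : Fin (n + 1)) (x : Fin (n + 1) → ℝ) :
    pd μ (fun y => pd μ f y * f y - f y * pd μ f y) x =
      pd μ (pd μ f) x * f x - f x * pd μ (pd μ f) x := by
  have hline : ContDiff ℝ 2 fun t : ℝ => f (x + t • Pi.single μ 1) := hf.comp (by fun_prop)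
  rw [pd, pd_pd_eq_deriv_deriv, show f x = f (x + (0 : ℝ) • Pi.single μ 1) by simp]
  simp only [pd_add_smul_single]
  exact deriv_deriv_mul_sub_mul_deriv (hline.differentiable (by norm_num))
    (hline.differentiable_deriv_two 0)

end NormedRing

variable {𝔸 : Type*} [NormedCommRing 𝔸] [NormedAlgebra ℝ 𝔸] {κ ι : Type*} [Fintype κ]
  [DecidableEq κ] [Fintype ι]

theorem pd_pd_kroneckerPi_const {P : (Fin (n + 1) → ℝ) → Matrix ι ι 𝔸} (hP : ContDiff ℝ 2 P)
    (μ : Fin (n + 1)) (x : Fin (n + 1) → ℝ) :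
    pd μ (pd μ fun y => kroneckerPi fun _ : κ => P y) x =
      ∑ r, kroneckerPi (update (fun _ => P x) r (pd μ (pd μ P) x)) +
        ∑ r, ∑ s ∈ Finset.univ.erase r,
          kroneckerPi (update (update (fun _ => P x) r (pd μ P x)) s (pd μ P x)) := by
  have hline : ContDiff ℝ 2 fun t : ℝ => P (x + t • Pi.single μ 1) := hP.comp (by fun_prop)
  rw [pd_pd_eq_deriv_deriv, pd_pd_eq_deriv_deriv,
    show P x = P (x + (0 : ℝ) • Pi.single μ 1) by simp]
  exact (hasDerivAt_deriv_kroneckerPi_const (hline.differentiable (by norm_num))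
    (hline.differentiable_deriv_two 0).hasDerivAt).deriv

end PartialDerivative

/-- If a smooth map `P` into projection matrices satisfies `[P, □P] = 0` and
`Σ'_μ ([P, ∂_μ P] ⊗ ∂_μ P + ∂_μ P ⊗ [P, ∂_μ P]) = 0`, then for every `k ≥ 1`
the tensor power satisfies `[⊗^k P, □(⊗^k P)] = 0`, so the tensor Noether
currents `[∂_μ(⊗^k P), ⊗^k P]` are conserved. -/
theorem tensor_noether_conservation {n N : ℕ}
    (P : (Fin (n + 1) → ℝ) → Matrix (Fin N) (Fin N) ℂ)
    (hP : ContDiff ℝ (⊤ : ℕ∞) P)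
    (hproj : ∀ x, P x * P x = P x)
    (heom : ∀ x, P x * msum (fun μ => pd μ (pd μ P) x) -
        msum (fun μ => pd μ (pd μ P) x) * P x = 0)
    (hsub : ∀ x, msum (fun μ =>
        (P x * pd μ P x - pd μ P x * P x) ⊗ₖ pd μ P x +
          pd μ P x ⊗ₖ (P x * pd μ P x - pd μ P x * P x)) = 0) :
    ∀ k : ℕ, 1 ≤ k → ∀ x,
      (tpow k (P x) * msum (fun μ => pd μ (pd μ (fun y => tpow k (P y))) x) -
          msum (fun μ => pd μ (pd μ (fun y => tpow k (P y))) x) * tpow k (P x) = 0) ∧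
      msum (fun μ => pd μ (fun y =>
          pd μ (fun y' => tpow k (P y')) y * tpow k (P y) -
            tpow k (P y) * pd μ (fun y' => tpow k (P y')) y) x) = 0 := by
  intro k _ x
  have hP₂ : ContDiff ℝ 2 P := hP.of_le (WithTop.coe_le_coe.2 le_top)
  have hD : ∀ μ, pd μ P x = P x * pd μ P x + pd μ P x * P x := fun μ => by
    have hd := hP₂.differentiable (by norm_num) x
    simpa only [hproj, add_comm] using pd_mul hd hd μ
  have hbox : Commute (tpow k (P x)) (msum fun μ => pd μ (pd μ fun y => tpow k (P y)) x) := by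
    simp only [tpow_eq_kroneckerPi, pd_pd_kroneckerPi_const hP₂]
    exact kroneckerPi_const_commute_msum (hproj x) _ _ hD (heom x) (hsub x)
  refine ⟨sub_eq_zero.2 hbox.eq, ?_⟩
  have hQ : ContDiff ℝ 2 fun y => tpow k (P y) := ContDiff.kroneckerPi fun _ => hP₂
  simp only [pd_pd_mul_sub_mul_pd hQ]
  rw [msum_sub, ← msum_mul, ← mul_msum, hbox.eq, sub_self]
end

section
/- Let a_0,…,a_n ∈ ℂ satisfy Σ'_μ a_μ^{p−i} ā_μ^i := a_0^{p−i} ā_0^i − Σ_{j=1}^n a_j^{p−i} ā_j^i = 0. Then for any holomorphic f, the function u(x) = f(a_0 x_0 + Σ_{j=1}^n a_j x_j) satisfies the (p,i)-submodel: Σ'_μ ∂_μ^{p−i}(u^k) ∂_μ^i(ū^l) = 0 for all 1 ≤ k ≤ p−i and 0 ≤ l ≤ i. -/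
lemma diff_iteratedDeriv {F : ℂ → ℂ} (hF : Differentiable ℂ F) (m : ℕ) :
    Differentiable ℂ (iteratedDeriv m F) :=
  (hF.contDiff (n := (⊤ : WithTop ℕ∞))).differentiable_iteratedDeriv m
    (by exact_mod_cast (WithTop.coe_lt_top _ : ((m : ℕ∞) : WithTop ℕ∞) < ⊤))

lemma phase_eq {n : ℕ} (a : Fin (n + 1) → ℂ) (μ : Fin (n + 1)) (x : Fin (n + 1) → ℝ)
    (t : ℝ) :
    (∑ ν, a ν * (((x + t • (Pi.single μ 1 : Fin (n + 1) → ℝ)) ν : ℝ) : ℂ))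
      = (∑ ν, a ν * (x ν : ℂ)) + (t : ℂ) * a μ := by
  have : ∀ ν, a ν * (((x + t • (Pi.single μ 1 : Fin (n + 1) → ℝ)) ν : ℝ) : ℂ)
      = a ν * (x ν : ℂ) + (t : ℂ) * (if ν = μ then a ν else 0) := by
    intro ν
    simp only [Pi.add_apply, Pi.smul_apply, Pi.single_apply, smul_eq_mul]
    push_cast
    split_ifs <;> push_cast <;> ring
  rw [Finset.sum_congr rfl fun ν _ => this ν, Finset.sum_add_distrib, ← Finset.mul_sum,
    Finset.sum_ite_eq' Finset.univ μ a, if_pos (Finset.mem_univ μ)]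

lemma hasDerivAt_phase {n : ℕ} (a : Fin (n + 1) → ℂ) (μ : Fin (n + 1))
    (x : Fin (n + 1) → ℝ) {F : ℂ → ℂ} (hF : Differentiable ℂ F) :
    HasDerivAt (fun t : ℝ => F ((∑ ν, a ν * (x ν : ℂ)) + (t : ℂ) * a μ))
      (deriv F (∑ ν, a ν * (x ν : ℂ)) * a μ) 0 := by
  set s := ∑ ν, a ν * (x ν : ℂ)
  have h1 : HasDerivAt (fun w : ℂ => s + w * a μ) (a μ) 0 := by
    simpa using ((hasDerivAt_id (0 : ℂ)).mul_const (a μ)).const_add s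
  have h2 := ((hF (s + 0 * a μ)).hasDerivAt).comp (0 : ℂ) h1
  simpa using h2.comp_ofReal

lemma pd_comp_linear {n : ℕ} (a : Fin (n + 1) → ℂ) (μ : Fin (n + 1)) {F : ℂ → ℂ}
    (hF : Differentiable ℂ F) (x : Fin (n + 1) → ℝ) :
    pd μ (fun y => F (∑ ν, a ν * (y ν : ℂ))) x
      = a μ * deriv F (∑ ν, a ν * (x ν : ℂ)) := by
  unfold pd
  have := (hasDerivAt_phase a μ x hF).deriv
  simp only [← phase_eq a μ x] at this
  rw [this]; ring

lemma pd_comp_linear_conj {n : ℕ} (a : Fin (n + 1) → ℂ) (μ : Fin (n + 1)) {F : ℂ → ℂ}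
    (hF : Differentiable ℂ F) (x : Fin (n + 1) → ℝ) :
    pd μ (fun y => star (F (∑ ν, a ν * (y ν : ℂ)))) x
      = star (a μ) * star (deriv F (∑ ν, a ν * (x ν : ℂ))) := by
  unfold pd
  have := ((hasDerivAt_phase a μ x hF).star).deriv
  simp only [← phase_eq a μ x] at this
  rw [this, star_mul']; ring

lemma pd_iter {n : ℕ} (a : Fin (n + 1) → ℂ) (μ : Fin (n + 1)) (m : ℕ) {F : ℂ → ℂ}
    (hF : Differentiable ℂ F) :
    (pd μ)^[m] (fun y => F (∑ ν, a ν * (y ν : ℂ)))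
      = fun x => a μ ^ m * iteratedDeriv m F (∑ ν, a ν * (x ν : ℂ)) := by
  induction m with
  | zero => simp [iteratedDeriv_zero]
  | succ m ih =>
    rw [Function.iterate_succ_apply', ih]
    funext x
    have hG : Differentiable ℂ (fun z => a μ ^ m * iteratedDeriv m F z) :=
      (diff_iteratedDeriv hF m).const_mul _
    have := pd_comp_linear a μ hG x
    rw [this, deriv_const_mul _ (diff_iteratedDeriv hF m _),
      iteratedDeriv_succ]
    ring

lemma pd_iter_conj {n : ℕ} (a : Fin (n + 1) → ℂ) (μ : Fin (n + 1)) (m : ℕ) {F : ℂ → ℂ}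
    (hF : Differentiable ℂ F) :
    (pd μ)^[m] (fun y => star (F (∑ ν, a ν * (y ν : ℂ))))
      = fun x => star (a μ) ^ m * star (iteratedDeriv m F (∑ ν, a ν * (x ν : ℂ))) := by
  induction m with
  | zero => simp [iteratedDeriv_zero]
  | succ m ih =>
    rw [Function.iterate_succ_apply', ih]
    have heq : (fun x : Fin (n + 1) → ℝ =>
        star (a μ) ^ m * star (iteratedDeriv m F (∑ ν, a ν * (x ν : ℂ))))
        = fun x => star ((fun z => a μ ^ m * iteratedDeriv m F z) (∑ ν, a ν * (x ν : ℂ))) := by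
      funext x; simp [star_mul', star_pow]
    rw [heq]
    funext x
    have hG : Differentiable ℂ (fun z => a μ ^ m * iteratedDeriv m F z) :=
      (diff_iteratedDeriv hF m).const_mul _
    have := pd_comp_linear_conj a μ hG x
    rw [this, deriv_const_mul _ (diff_iteratedDeriv hF m _),
      iteratedDeriv_succ, star_mul', star_pow]
    ring

lemma msum_mul_const {n : ℕ} (A : Fin (n + 1) → ℂ) (C : ℂ) :
    msum (fun μ => A μ * C) = msum A * C := by
  unfold msum
  rw [sub_mul, Finset.sum_mul]

/-- Solutions of the `(p,i)`-submodel from a null linear phase: if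
`a_0^{p−i} ā_0^i − Σ_j a_j^{p−i} ā_j^i = 0` then for any holomorphic `f`,
`u(x) = f(a_0 x_0 + Σ_j a_j x_j)` satisfies
`Σ'_μ ∂_μ^{p−i}(u^k) ∂_μ^i(ū^l) = 0` for all `1 ≤ k ≤ p−i`, `0 ≤ l ≤ i`. -/
theorem pi_submodel_linear_phase_solution {n : ℕ} (p i : ℕ)
    (hp : 2 ≤ p) (hi : 2 * i + 1 ≤ p)
    (a : Fin (n + 1) → ℂ)
    (hnull : msum (fun μ => a μ ^ (p - i) * (star (a μ)) ^ i) = 0)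
    (f : ℂ → ℂ) (hf : Differentiable ℂ f) :
    ∀ k ∈ Finset.Icc 1 (p - i), ∀ l ∈ Finset.Icc 0 i, ∀ x : Fin (n + 1) → ℝ,
      msum (fun μ => (pd μ)^[p - i] (fun y => f (∑ ν, a ν * (y ν : ℂ)) ^ k) x *
        (pd μ)^[i] (fun y => star (f (∑ ν, a ν * (y ν : ℂ))) ^ l) x) = 0 := by
  intro k _ l _ x
  set s := ∑ ν, a ν * (x ν : ℂ) with hs
  have hF1 : Differentiable ℂ (fun z => f z ^ k) := hf.pow k
  have hF2 : Differentiable ℂ (fun z => f z ^ l) := hf.pow l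
  have e1 : ∀ μ, (pd μ)^[p - i] (fun y => f (∑ ν, a ν * (y ν : ℂ)) ^ k) x
      = a μ ^ (p - i) * iteratedDeriv (p - i) (fun z => f z ^ k) s := by
    intro μ
    have := pd_iter a μ (p - i) hF1
    exact congrFun this x
  have e2 : ∀ μ, (pd μ)^[i] (fun y => star (f (∑ ν, a ν * (y ν : ℂ))) ^ l) x
      = star (a μ) ^ i * star (iteratedDeriv i (fun z => f z ^ l) s) := by
    intro μ
    have heq : (fun y : Fin (n + 1) → ℝ => star (f (∑ ν, a ν * (y ν : ℂ))) ^ l)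
        = fun y => star ((fun z => f z ^ l) (∑ ν, a ν * (y ν : ℂ))) := by
      funext y; simp [star_pow]
    rw [heq]
    exact congrFun (pd_iter_conj a μ i hF2) x
  have : (fun μ => (pd μ)^[p - i] (fun y => f (∑ ν, a ν * (y ν : ℂ)) ^ k) x *
        (pd μ)^[i] (fun y => star (f (∑ ν, a ν * (y ν : ℂ))) ^ l) x)
      = fun μ => (a μ ^ (p - i) * star (a μ) ^ i) *
        (iteratedDeriv (p - i) (fun z => f z ^ k) s *
          star (iteratedDeriv i (fun z => f z ^ l) s)) := by
    funext μ; rw [e1 μ, e2 μ]; ring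
  rw [this, msum_mul_const, hnull, zero_mul]
end
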